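/- arXiv:2605.02760 — 2 statements merged into one kernel-verified Lean document; each statement's English description precedes it below -/
import Mathlib

section
/- Let G be a finite group, 𝓕 a family of subgroups of G closed under conjugation and under taking subgroups, and R a commutative ring with 1. If C is a finite-dimensional chain complex of projective RΓ_G-modules, then its dimension function Dim C : S(G) → ℤ is monotone; that is, (Dim C)(L) ≥ (Dim C)(K) whenever (L) ≤ (K). -/
open CategoryTheory CategoryTheory.Limits Opposite

/-! Core: orbit category over a family of subgroups, modules over it,
chain complexes, dimension functions, homology spheres. -/

/-- The conjugate subgroup `g K g⁻¹`. -/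
def conjSub {G : Type} [Group G] (g : G) (K : Subgroup G) : Subgroup G :=
  K.map (MulAut.conj g).toMonoidHom

/-- A family of subgroups of `G`, closed under conjugation and under taking subgroups. -/
structure SubgroupFamily (G : Type) [Group G] : Type where
  mem : Subgroup G → Prop
  conj_mem : ∀ (g : G) (K : Subgroup G), mem K → mem (conjSub g K)
  le_mem : ∀ (H K : Subgroup G), H ≤ K → mem K → mem H

/-- `(H) ≤ (K)` : some conjugate of `H` is contained in `K`, i.e. `g⁻¹ H g ≤ K` for some `g`. -/
def ConjLE {G : Type} [Group G] (H K : Subgroup G) : Prop := ∃ g : G, H ≤ conjSub g K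

/-- A conjugation-invariant (super class) function. -/
def ConjInv {G : Type} [Group G] (n : Subgroup G → ℤ) : Prop :=
  ∀ (g : G) (K : Subgroup G), n (conjSub g K) = n K

/-- Monotone super class function: `n(H) ≥ n(K)` whenever `(H) ≤ (K)`. -/
def MonotoneConj {G : Type} [Group G] (n : Subgroup G → ℤ) : Prop :=
  ∀ H K : Subgroup G, ConjLE H K → n K ≤ n H

/-- Objects of the orbit category `Or_𝓕 G`: orbits `G/K` with `K ∈ 𝓕`. -/
def OrbitObj {G : Type} [Group G] (F : SubgroupFamily G) : Type := {K : Subgroup G // F.mem K}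

/-- The orbit category: morphisms `G/K → G/L` are the `G`-equivariant maps. -/
instance {G : Type} [Group G] (F : SubgroupFamily G) : Category (OrbitObj F) where
  Hom K L := (G ⧸ K.1) →[G] (G ⧸ L.1)
  id K := MulActionHom.id G
  comp f g := g.comp f

/-- The category of `RΓ_G`-modules: contravariant functors from the orbit
category to `R`-modules. -/
abbrev OrbitMod (R : Type) [CommRing R] {G : Type} [Group G] (F : SubgroupFamily G) :=
  (OrbitObj F)ᵒᵖ ⥤ ModuleCat.{0} R

variable {G : Type} [Group G] {R : Type} [CommRing R] {F : SubgroupFamily G}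

/-- The free `RΓ_G`-module `R[G/H^?]`, with value the free `R`-module on
`Map_G(G/K, G/H)` at the object `G/K`. -/
noncomputable def freeAt (R : Type) [CommRing R] {G : Type} [Group G] {F : SubgroupFamily G}
    (H : OrbitObj F) : OrbitMod R F where
  obj K := ModuleCat.of R ((K.unop ⟶ H) →₀ R)
  map f := ModuleCat.ofHom (Finsupp.lmapDomain R R (fun u => f.unop ≫ u))
  map_id K := by
    apply ModuleCat.hom_ext
    simp only [ModuleCat.hom_ofHom, ModuleCat.hom_id, unop_id, Category.id_comp]
    exact Finsupp.lmapDomain_id R R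
  map_comp f g := by
    apply ModuleCat.hom_ext
    simp only [ModuleCat.hom_ofHom, ModuleCat.hom_comp, unop_comp, Category.assoc]
    exact Finsupp.lmapDomain_comp R R _ _

/-- A free `RΓ_G`-module: a direct sum of modules `R[G/H^?]`, `H ∈ 𝓕`. -/
def IsFreeMod (M : OrbitMod R F) : Prop :=
  ∃ (ι : Type) (b : ι → OrbitObj F), Nonempty (M ≅ ∐ (fun i => freeAt R (b i)))

/-- A finitely generated `RΓ_G`-module: admits an epimorphism from a
finitely generated free module. -/
def IsFGMod (M : OrbitMod R F) : Prop :=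
  ∃ (ι : Type) (_ : Fintype ι) (b : ι → OrbitObj F)
    (π : (∐ (fun i => freeAt R (b i))) ⟶ M), Epi π

/-- A projective `RΓ_G`-module: a direct summand of a free module. -/
def IsProjMod (M : OrbitMod R F) : Prop :=
  ∃ (Fr : OrbitMod R F), IsFreeMod Fr ∧ ∃ (s : M ⟶ Fr) (r : Fr ⟶ M), s ≫ r = 𝟙 M

/-- Chain complexes of `RΓ_G`-modules (non-negatively graded). -/
abbrev OrbitComplex (R : Type) [CommRing R] {G : Type} [Group G] (F : SubgroupFamily G) :=
  ChainComplex (OrbitMod R F) ℕ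

/-- The chain complex `C` vanishes at the object `G/K` in degree `i`. -/
def IsZeroAt (C : OrbitComplex R F) (K : OrbitObj F) (i : ℕ) : Prop :=
  Subsingleton ((C.X i).obj (op K))

/-- The chain complex `C` is finite-dimensional: `C_i = 0` for all large `i`. -/
def IsFiniteDimC (C : OrbitComplex R F) : Prop :=
  ∃ n : ℕ, ∀ i : ℕ, n < i → ∀ K : OrbitObj F, IsZeroAt C K i

/-- The chain complex `C` is finite: finite-dimensional with finitely
generated chain modules. -/
def IsFiniteC (C : OrbitComplex R F) : Prop :=
  IsFiniteDimC C ∧ ∀ i : ℕ, IsFGMod (C.X i)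

/-- `dim C(K)`: the largest `d` with `C_d(K) ≠ 0` (or `-1` for the zero complex). -/
noncomputable def dimAt (C : OrbitComplex R F) (K : OrbitObj F) : ℤ :=
  sSup (insert (-1 : ℤ) {d : ℤ | ∃ i : ℕ, (i : ℤ) = d ∧ ¬ IsZeroAt C K i})

/-- The dimension function `Dim C : S(G) → ℤ`, with value `-1` outside `𝓕`. -/
noncomputable def DimFun (C : OrbitComplex R F) : Subgroup G → ℤ := fun H =>
  open scoped Classical in
  if h : F.mem H then dimAt C ⟨H, h⟩ else -1

/-- The augmented complex `⋯ → C₁ → C₀ → M → 0` (with `M` placed in degree `0`,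
i.e. the whole complex shifted up by one). -/
noncomputable def augment {V : Type 1} [Category.{0} V] [Abelian V]
    (C : ChainComplex V ℕ) (M : V) (π : C.X 0 ⟶ M) (h : C.d 1 0 ≫ π = 0) :
    ChainComplex V ℕ :=
  ChainComplex.of
    (fun j => match j with
      | 0 => M
      | (i+1) => C.X i)
    (fun j => match j with
      | 0 => π
      | (i+1) => C.d (i+1) i)
    (fun j => match j with
      | 0 => h
      | (i+1) => C.d_comp_d (i+2) (i+1) i)

/-- The constant coefficient system `R̲`. -/
noncomputable def constR (R : Type) [CommRing R] {G : Type} [Group G] (F : SubgroupFamily G) :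
    OrbitMod R F :=
  (Functor.const (OrbitObj F)ᵒᵖ).obj (ModuleCat.of R R)

/-- Evaluation of a chain complex over `RΓ_G` at the object `G/K`. -/
noncomputable def evalC (C : OrbitComplex R F) (K : OrbitObj F) :
    ChainComplex (ModuleCat.{0} R) ℕ where
  X i := (C.X i).obj (op K)
  d i j := (C.d i j).app (op K)
  shape i j hij := by rw [C.shape i j hij, NatTrans.app_zero]
  d_comp_d' i j k _ _ := by
    rw [← NatTrans.comp_app, C.d_comp_d]; rfl

/-- The augmented complex of `C(K)` (with `R` in degree `-1`, shifted up by one). -/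
noncomputable def augC (C : OrbitComplex R F) (ε : C.X 0 ⟶ constR R F)
    (h : C.d 1 0 ≫ ε = 0) (K : OrbitObj F) : ChainComplex (ModuleCat.{0} R) ℕ :=
  augment (evalC C K) (ModuleCat.of R R) (ε.app (op K))
    (by show (C.d 1 0).app (op K) ≫ ε.app (op K) = 0
        rw [show (C.d 1 0).app (op K) ≫ ε.app (op K) = (C.d 1 0 ≫ ε).app (op K) from rfl, h]; rfl)

/-- `C` is an `R`-homology `n`-sphere: there is an augmentation `ε : C₀ → R̲`
such that for every `K ∈ 𝓕` the reduced homology of `C(K)` is that of the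
sphere `S^{n(K)}` with coefficients in `R`.  (The homology of the augmented
complex — shifted up by one — is `R` in degree `n(K)+1` and zero elsewhere.) -/
noncomputable def IsHomologySphere (C : OrbitComplex R F) (n : Subgroup G → ℤ) : Prop :=
  ∃ (ε : C.X 0 ⟶ constR R F) (h : C.d 1 0 ≫ ε = 0),
    (∀ K : OrbitObj F, (∃ i, ¬ IsZeroAt C K i) → Function.Surjective (ε.app (op K))) ∧
    ∀ (K : OrbitObj F) (j : ℕ),
      (if (j : ℤ) = n K.1 + 1
        then Nonempty ((augC C ε h K).homology j ≅ ModuleCat.of R R)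
        else Subsingleton ((augC C ε h K).homology j))

/-- The chain map `C(K) → C(H)` induced by a `G`-map `f : G/H → G/K`. -/
noncomputable def evalMap (C : OrbitComplex R F) {H K : OrbitObj F} (f : H ⟶ K) :
    evalC C K ⟶ evalC C H where
  f i := (C.X i).map f.op
  comm' i j _ := (C.d i j).naturality f.op

/-- Condition (ii) of an algebraic homotopy representation: if `n(H) = n(K)`,
every `G`-map `f : G/H → G/K` induces an `R`-homology isomorphism `C(K) → C(H)`. -/
noncomputable def CondII (C : OrbitComplex R F) (n : Subgroup G → ℤ) : Prop :=
  ∀ (H K : OrbitObj F) (f : H ⟶ K), n H.1 = n K.1 →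
    ∀ i : ℕ, IsIso (HomologicalComplex.homologyMap (evalMap C f) i)

/-- Condition (iii) of an algebraic homotopy representation. -/
def CondIII (F : SubgroupFamily G) (n : Subgroup G → ℤ) : Prop :=
  ∀ H K L : Subgroup G, F.mem H → F.mem K → F.mem L → H ≤ K → H ≤ L →
    n H = n K → n H = n L → -1 < n H → F.mem (K ⊔ L) ∧ n (K ⊔ L) = n H

/-! A surjective `G`-map `G/L → G/K` (which exists whenever `(L) ≤ (K)`) is an epimorphism of
the orbit category, so precomposition with it is injective on every `Map_G(G/K, G/H)`. Hence it
induces injections `M(K) → M(L)` on free modules, and then on projective ones, since coproducts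
of `R`-modules preserve injections and injectivity passes to retracts. So `C_i(L) = 0` forces
`C_i(K) = 0`. -/

lemma mem_conjSub_iff {g x : G} {K : Subgroup G} : x ∈ conjSub g K ↔ g⁻¹ * x * g ∈ K := by
  rw [conjSub, Subgroup.mem_map_equiv, MulAut.conj_symm_apply]

def conjQuotientHom {L K : Subgroup G} (g : G) (h : L ≤ conjSub g K) :
    (G ⧸ L) →[G] (G ⧸ K) where
  toFun := Quotient.map' (· * g) fun a c hac => by
    rw [QuotientGroup.leftRel_apply] at hac ⊢
    simpa [mul_assoc] using mem_conjSub_iff.1 (h hac)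
  map_smul' a x := Quotient.inductionOn' x fun z => by
    show QuotientGroup.mk (a * z * g) = (QuotientGroup.mk (a * (z * g)) : G ⧸ K)
    rw [mul_assoc]

lemma conjQuotientHom_surjective {L K : Subgroup G} (g : G) (h : L ≤ conjSub g K) :
    Function.Surjective (conjQuotientHom g h) :=
  Quotient.ind' fun x =>
    ⟨QuotientGroup.mk (x * g⁻¹), congrArg QuotientGroup.mk (inv_mul_cancel_right x g)⟩

-- `X ⟶ Y` is not reducibly a `MulActionHom`, so coercion to a function goes through this.
def OrbitObj.toMulActionHom {X Y : OrbitObj F} (φ : X ⟶ Y) : (G ⧸ X.1) →[G] (G ⧸ Y.1) := φ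

lemma OrbitObj.epi_of_surjective {X Y : OrbitObj F} (φ : X ⟶ Y)
    (hφ : Function.Surjective (OrbitObj.toMulActionHom φ)) : Epi φ where
  left_cancellation {Z} u v huv := MulActionHom.ext fun y => by
    obtain ⟨x, rfl⟩ := hφ y
    exact DFunLike.congr_fun (congrArg OrbitObj.toMulActionHom huv) x

def OrbitObj.homOfLEConj (X Y : OrbitObj F) (g : G) (h : X.1 ≤ conjSub g Y.1) : X ⟶ Y :=
  conjQuotientHom g h

lemma freeAt_map_injective (H : OrbitObj F) {X Y : OrbitObj F} (φ : X ⟶ Y) [Epi φ] :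
    Function.Injective ((freeAt R H).map φ.op) :=
  Finsupp.mapDomain_injective fun _ _ h => (cancel_epi φ).1 h

lemma mono_sigma_map {C : Type} [SmallCategory C] {ι : Type} (P : ι → C ⥤ ModuleCat.{0} R)
    {X Y : C} (f : X ⟶ Y) [∀ i, Mono ((P i).map f)] : Mono ((∐ P).map f) := by
  let D := Discrete.functor P
  let ψ : D ⋙ (evaluation _ _).obj X ⟶ D ⋙ (evaluation _ _).obj Y :=
    Discrete.natTrans fun i => (P i.as).map f
  have (i : Discrete ι) : Mono (ψ.app i) := inferInstanceAs (Mono ((P i.as).map f))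
  have := NatTrans.mono_of_mono_app ψ
  -- `colim` preserves monomorphisms since `ModuleCat R` satisfies AB4
  exact colim.map_mono' ψ
    (isColimitOfPreserves ((evaluation _ _).obj X) (colimit.isColimit D))
    (isColimitOfPreserves ((evaluation _ _).obj Y) (colimit.isColimit D)) _
    (fun j => ((colimit.ι D j).naturality f).symm)

lemma CategoryTheory.Functor.mono_map_of_retract {C D : Type*} [Category C] [Category D]
    {M N : C ⥤ D} (s : M ⟶ N) (r : N ⟶ M) (hsr : s ≫ r = 𝟙 M) {X Y : C} (f : X ⟶ Y)
    [Mono (N.map f)] : Mono (M.map f) := by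
  have : IsSplitMono (s.app X) :=
    ⟨⟨r.app X, by rw [← NatTrans.comp_app, hsr, NatTrans.id_app]⟩⟩
  have : Mono (M.map f ≫ s.app Y) := by rw [s.naturality]; infer_instance
  exact mono_of_mono _ (s.app Y)

lemma IsProjMod.mono_map {M : OrbitMod R F} (hM : IsProjMod M) {X Y : OrbitObj F} (φ : X ⟶ Y)
    [Epi φ] : Mono (M.map φ.op) := by
  obtain ⟨Fr, ⟨ι, b, ⟨e⟩⟩, s, r, hsr⟩ := hM
  have (i : ι) : Mono ((freeAt R (b i)).map φ.op) :=
    (ModuleCat.mono_iff_injective _).2 (freeAt_map_injective _ φ)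
  have := mono_sigma_map (fun i => freeAt R (b i)) φ.op
  have := Functor.mono_map_of_retract e.hom e.inv e.hom_inv_id φ.op
  exact Functor.mono_map_of_retract s r hsr φ.op

lemma IsFiniteDimC.bddAbove {C : OrbitComplex R F} (hC : IsFiniteDimC C) (X : OrbitObj F) :
    BddAbove (insert (-1 : ℤ) {d : ℤ | ∃ i : ℕ, (i : ℤ) = d ∧ ¬ IsZeroAt C X i}) := by
  obtain ⟨n, hn⟩ := hC
  refine ⟨n, ?_⟩
  rintro d (rfl | ⟨i, rfl, hi⟩)
  · omega
  · by_contra hlt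
    exact hi (hn i (by omega) X)

lemma neg_one_le_dimAt {C : OrbitComplex R F} (hC : IsFiniteDimC C) (X : OrbitObj F) :
    -1 ≤ dimAt C X :=
  le_csSup (hC.bddAbove X) (Set.mem_insert _ _)

lemma dimAt_le_of_epi {C : OrbitComplex R F} (hC : IsFiniteDimC C)
    (hproj : ∀ i, IsProjMod (C.X i)) {X Y : OrbitObj F} (φ : X ⟶ Y) [Epi φ] :
    dimAt C Y ≤ dimAt C X := by
  refine csSup_le_csSup (hC.bddAbove X) ⟨-1, Set.mem_insert _ _⟩ (Set.insert_subset_insert ?_)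
  rintro _ ⟨i, rfl, hi⟩
  refine ⟨i, rfl, fun (_ : Subsingleton _) => hi ?_⟩
  have := (hproj i).mono_map φ
  exact ((ModuleCat.mono_iff_injective _).1 this).subsingleton

theorem statement0_general (G R : Type) [Group G] [CommRing R]
    (F : SubgroupFamily G) (C : OrbitComplex R F)
    (hfin : IsFiniteDimC C) (hproj : ∀ i : ℕ, IsProjMod (C.X i)) :
    MonotoneConj (DimFun C) := by
  rintro L K ⟨g, hg⟩
  unfold DimFun
  by_cases hK : F.mem K
  · have hL : F.mem L := F.le_mem L (conjSub g K) hg (F.conj_mem g K hK)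
    rw [dif_pos hK, dif_pos hL]
    let φ := OrbitObj.homOfLEConj ⟨L, hL⟩ ⟨K, hK⟩ g hg
    have : Epi φ := OrbitObj.epi_of_surjective φ (conjQuotientHom_surjective g hg)
    exact dimAt_le_of_epi hfin hproj φ
  · rw [dif_neg hK]
    split_ifs
    exacts [neg_one_le_dimAt hfin _, le_rfl]

/-- cf. [HPY, Lemma on monotonicity].  For a finite group `G`,
a family `𝓕` of subgroups closed under conjugation and subgroups, and a
commutative ring `R`: the dimension function of any finite-dimensional chain
complex of projective `RΓ_G`-modules is monotone, i.e.
`(Dim C)(L) ≥ (Dim C)(K)` whenever `(L) ≤ (K)`. -/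
theorem statement0 (G R : Type) [Group G] [Finite G] [CommRing R]
    (F : SubgroupFamily G) (C : OrbitComplex R F)
    (hfin : IsFiniteDimC C) (hproj : ∀ i : ℕ, IsProjMod (C.X i)) :
    MonotoneConj (DimFun C) :=
  statement0_general G R F C hfin hproj
end

section
/- Let p be a prime and G a finite p-group of rank two (G contains a subgroup isomorphic to ℤ/p × ℤ/p but no subgroup isomorphic to (ℤ/p)³). Then there exists a nonzero finite-dimensional real inner product space V with an orthogonal (isometric linear) action of G such that for every unit vector x in the unit sphere S(V), the stabilizer G_x = {g ∈ G : g·x = x} has rank at most 1, i.e. G_x contains no subgroup isomorphic to ℤ/p × ℤ/p. -/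
/-!
Let `z` be a central element of order `p` (it exists since the centre of a nontrivial `p`-group
is nontrivial). If an elementary abelian subgroup `A ≅ (ℤ/p)²` missed `z`, then `A × ⟨z⟩` would
embed in `G` as a copy of `(ℤ/p)³`; so every such `A` contains `z`. Take for `V` the orthogonal
complement of the fixed space of `z` in the regular representation: it is `G`-invariant because
`z` is central, nonzero because `z ≠ 1`, and `z` fixes no unit vector of it, so no stabilizer
contains `z`. Finally a subgroup `(ℤ/q)²` of a `p`-group forces `q = p`.
-/

/-- An orthogonal representation of `G`: a finite-dimensional real inner
product space `V` together with an action of `G` by linear isometries. -/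
structure OrthogonalRep (G : Type) [Group G] : Type 1 where
  V : Type
  [nacg : NormedAddCommGroup V]
  [ips : InnerProductSpace ℝ V]
  [fd : FiniteDimensional ℝ V]
  ρ : G →* (V ≃ₗᵢ[ℝ] V)

attribute [instance] OrthogonalRep.nacg OrthogonalRep.ips OrthogonalRep.fd

open Subgroup

section GroupTheory

variable {G : Type*} [Group G]

theorem IsPGroup.eq_of_orderOf_eq_prime {p q : ℕ} [Fact p.Prime] (hG : IsPGroup p G)
    (hq : q.Prime) {g : G} (hg : orderOf g = q) : q = p := by
  have hg1 : g ≠ 1 := by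
    rintro rfl
    exact hq.one_lt.ne (orderOf_one.symm.trans hg)
  exact ((Nat.prime_dvd_prime_iff_eq Fact.out hq).1 (hg ▸ hG.dvd_orderOf hg1)).symm

theorem IsPGroup.exists_mem_center_orderOf_eq {p : ℕ} [Fact p.Prime] [Finite G] [Nontrivial G]
    (hG : IsPGroup p G) : ∃ z ∈ center G, orderOf z = p := by
  have := hG.center_nontrivial
  have hdvd : p ∣ Nat.card (center G) :=
    (hG.to_subgroup _).card_eq_or_dvd.resolve_left Finite.one_lt_card.ne'
  obtain ⟨z, hz⟩ := exists_prime_orderOf_dvd_card' p hdvd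
  exact ⟨z, z.2, (orderOf_coe z).trans hz⟩

theorem Subgroup.disjoint_zpowers_of_notMem {H : Subgroup G} {z : G} (hz : (orderOf z).Prime)
    (hzH : z ∉ H) : Disjoint H (zpowers z) := by
  have : Finite (zpowers z) := (orderOf_pos_iff.1 hz.pos).finite_zpowers.to_subtype
  have hdvd : Nat.card (H ⊓ zpowers z : Subgroup G) ∣ orderOf z :=
    Nat.card_zpowers z ▸ card_dvd_of_le inf_le_right
  rcases (Nat.dvd_prime hz).1 hdvd with h1 | hcard
  · exact disjoint_iff.2 (card_eq_one.1 h1)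
  · have hz : z ∈ H ⊓ zpowers z :=
      (eq_of_le_of_card_ge (inf_le_right : H ⊓ zpowers z ≤ _)
        (by rw [hcard, Nat.card_zpowers])).symm ▸ mem_zpowers z
    exact absurd hz.1 hzH

theorem Subgroup.exists_mulEquiv_prod_zmod_of_mem_center {p : ℕ} (hp : p.Prime) {z : G}
    (hz : z ∈ center G) (hzp : orderOf z = p) {H : Subgroup G} (hzH : z ∉ H) :
    ∃ B : Subgroup G, Nonempty (B ≃* H × Multiplicative (ZMod p)) := by
  let e : Multiplicative (ZMod p) ≃* zpowers z :=
    zmodMulEquivOfGenerator (g := ⟨z, mem_zpowers z⟩)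
      (by rintro ⟨_, k, rfl⟩; exact ⟨k, Subtype.ext (by simp)⟩) ((Nat.card_zpowers z).trans hzp)
  let f : Multiplicative (ZMod p) →* G := (zpowers z).subtype.comp e.toMonoidHom
  have hcomm : ∀ h c, Commute (H.subtype h) (f c) := fun h c =>
    mem_center_iff.1 (zpowers_le.2 hz (e c).2) h
  have hdisj : Disjoint H (zpowers z) := disjoint_zpowers_of_notMem (hzp ▸ hp) hzH
  have hinj : Function.Injective (H.subtype.noncommCoprod f hcomm) := by
    refine (MonoidHom.noncommCoprod_injective _ _ _).2
      ⟨H.subtype_injective, (zpowers z).subtype_injective.comp e.injective, ?_⟩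
    rw [disjoint_def] at hdisj ⊢
    rintro _ ⟨h, rfl⟩ ⟨c, hc⟩
    exact hdisj h.2 (hc ▸ (e c).2)
  exact ⟨_, ⟨(MonoidHom.ofInjective hinj).symm⟩⟩

theorem Subgroup.mem_of_mulEquiv_zmod_prod_of_mem_center {p : ℕ} (hp : p.Prime) {z : G}
    (hz : z ∈ center G) (hzp : orderOf z = p)
    (hrk3 : ¬ ∃ B : Subgroup G, Nonempty (B ≃* Multiplicative (ZMod p × ZMod p × ZMod p)))
    {A : Subgroup G} (e : A ≃* Multiplicative (ZMod p × ZMod p)) : z ∈ A := by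
  by_contra hzA
  obtain ⟨B, ⟨eB⟩⟩ := exists_mulEquiv_prod_zmod_of_mem_center hp hz hzp hzA
  exact hrk3 ⟨B, ⟨eB.trans ((e.prodCongr (MulEquiv.refl _)).trans
    ((MulEquiv.prodMultiplicative _ _).symm.trans AddEquiv.prodAssoc.toMultiplicative))⟩⟩

end GroupTheory

section Representations

variable {G E : Type*} [Group G] [NormedAddCommGroup E] [InnerProductSpace ℝ E]

noncomputable def regularOrthogonalRep (G : Type*) [Group G] [Fintype G] :
    G →* (EuclideanSpace ℝ G ≃ₗᵢ[ℝ] EuclideanSpace ℝ G) where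
  toFun g := LinearIsometryEquiv.piLpCongrLeft 2 ℝ ℝ (Equiv.mulLeft g)
  map_one' := by
    ext v i
    change v ((1 : G)⁻¹ * i) = v i
    rw [inv_one, one_mul]
  map_mul' g h := by
    ext v i
    change v ((g * h)⁻¹ * i) = v (h⁻¹ * (g⁻¹ * i))
    rw [mul_inv_rev, mul_assoc]

theorem regularOrthogonalRep_apply [Fintype G] (g : G) (v : EuclideanSpace ℝ G) (i : G) :
    regularOrthogonalRep G g v i = v (g⁻¹ * i) := rfl

theorem regularOrthogonalRep_single_ne [Fintype G] [DecidableEq G] {g : G} (hg : g ≠ 1) :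
    regularOrthogonalRep G g (EuclideanSpace.single 1 1) ≠ EuclideanSpace.single 1 1 := by
  intro h
  have := congrArg (· g) h
  simp [regularOrthogonalRep_apply, hg] at this

theorem Submodule.map_eq_self_of_forall_mem (ρ : G →* (E ≃ₗᵢ[ℝ] E)) {U : Submodule ℝ E}
    (hU : ∀ g, ∀ x ∈ U, ρ g x ∈ U) (g : G) : U.map (ρ g : E →ₗ[ℝ] E) = U :=
  le_antisymm (map_le_iff_le_comap.2 fun x hx => hU g x hx)
    fun x hx => ⟨ρ g⁻¹ x, hU _ _ hx, by simp [map_inv, LinearIsometryEquiv.coe_inv]⟩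

theorem Submodule.orthogonal_map_eq_self {U : Submodule ℝ E} {f : E ≃ₗᵢ[ℝ] E}
    (hU : U.map (f : E →ₗ[ℝ] E) = U) : Uᗮ.map (f : E →ₗ[ℝ] E) = Uᗮ :=
  (U.map_orthogonal_equiv f).trans (congrArg _ hU)

noncomputable def restrictRep (ρ : G →* (E ≃ₗᵢ[ℝ] E)) (U : Submodule ℝ E)
    (hU : ∀ g, U.map (ρ g : E →ₗ[ℝ] E) = U) : G →* (U ≃ₗᵢ[ℝ] U) where
  toFun g := (LinearIsometryEquiv.submoduleMap U (ρ g)).trans (.ofEq _ _ (hU g))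
  map_one' := by ext; simp
  map_mul' g h := by ext; simp

theorem exists_orthogonalRep_eq_zero_of_apply_eq_self {G : Type} [Group G] [Finite G] {z : G}
    (hz : z ∈ center G) (hz1 : z ≠ 1) :
    ∃ W : OrthogonalRep G, Nontrivial W.V ∧ ∀ x : W.V, W.ρ z x = x → x = 0 := by
  classical
  have := Fintype.ofFinite G
  let ρ := regularOrthogonalRep G
  let F := LinearMap.eqLocus (ρ z : EuclideanSpace ℝ G →ₗ[ℝ] _) LinearMap.id
  have hF : ∀ g, ∀ v ∈ F, ρ g v ∈ F := fun g v (hv : ρ z v = v) => by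
    have := congrArg (ρ · v) (mem_center_iff.1 hz g)
    simp only [map_mul, LinearIsometryEquiv.coe_mul, Function.comp_apply, hv] at this
    exact this.symm
  have hFperp g : Fᗮ.map (ρ g : EuclideanSpace ℝ G →ₗ[ℝ] _) = Fᗮ :=
    F.orthogonal_map_eq_self (F.map_eq_self_of_forall_mem ρ hF g)
  refine ⟨⟨Fᗮ, restrictRep ρ Fᗮ hFperp⟩, ?_, fun x hx => ?_⟩
  · rw [Submodule.nontrivial_iff_ne_bot, Ne, Submodule.orthogonal_eq_bot_iff,
      Submodule.eq_top_iff']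
    exact fun h => regularOrthogonalRep_single_ne hz1 (h _)
  · exact Subtype.ext (F.orthogonal_disjoint.le_bot ⟨congrArg Subtype.val hx, x.2⟩)

end Representations

/-- cf. Dotzel–Hamrick.  Every finite `p`-group of rank two
admits a nonzero orthogonal representation `V` such that the isotropy subgroup
of every unit vector `x ∈ S(V)` has rank at most one, i.e. the stabilizer
`G_x` contains no subgroup isomorphic to `ℤ/q × ℤ/q` for any prime `q`. -/
theorem statement13 (p : ℕ) (hp : p.Prime) (G : Type) [Group G] [Finite G]
    (hpG : IsPGroup p G)
    (hrk2 : ∃ A : Subgroup G, Nonempty (A ≃* Multiplicative (ZMod p × ZMod p)))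
    (hrk3 : ¬ ∃ A : Subgroup G, Nonempty (A ≃* Multiplicative (ZMod p × ZMod p × ZMod p))) :
    ∃ W : OrthogonalRep G, Nontrivial W.V ∧
      ∀ x : W.V, ‖x‖ = 1 →
        ∀ q : ℕ, q.Prime →
          ¬ ∃ A : Subgroup G, (∀ g ∈ A, W.ρ g x = x) ∧
              Nonempty (A ≃* Multiplicative (ZMod q × ZMod q)) := by
  have := Fact.mk hp
  obtain ⟨A₀, ⟨e₀⟩⟩ := hrk2
  have : Nontrivial A₀ := e₀.toEquiv.nontrivial
  have : Nontrivial G := A₀.subtype_injective.nontrivial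
  obtain ⟨z, hz, hzp⟩ := hpG.exists_mem_center_orderOf_eq
  have hz1 : z ≠ 1 := by
    rintro rfl
    exact hp.one_lt.ne (orderOf_one.symm.trans hzp)
  obtain ⟨W, hW, hfix⟩ := exists_orthogonalRep_eq_zero_of_apply_eq_self hz hz1
  refine ⟨W, hW, fun x hx q hq ⟨A, hxA, ⟨e⟩⟩ => ?_⟩
  obtain rfl : q = p := (hpG.to_subgroup A).eq_of_orderOf_eq_prime hq
    (g := e.symm (.ofAdd (1, 0))) (by simp [orderOf_ofAdd_eq_addOrderOf, Prod.addOrderOf])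
  have hzA := mem_of_mulEquiv_zmod_prod_of_mem_center hp hz hzp hrk3 e
  have hx0 : x = 0 := hfix x (hxA z hzA)
  simp [hx0] at hx
end
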